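/- There exists a constant C > 0 such that for every λ ≥ 1 and every measurable u : Q → Sym(2,ℝ) on the unit square Q, one has λ^{-1/2}∫_Q |u|² dx ≤ C ∫_Q h_λ(u) dx, where h_λ is the quasiconvexified integrand. In particular, a uniform bound on ∫_Q h_λ(u_λ) implies λ^{-1/4} u_λ is bounded in L². -/

import Mathlib

noncomputable def frob {n : ℕ} (τ : Matrix (Fin n) (Fin n) ℝ) : ℝ :=
  Real.sqrt (∑ i, ∑ j, (τ i j) ^ 2)

/-- `ρ⁽²⁾(τ) = |τ₁| + |τ₂|`, the sum of absolute values of eigenvalues. -/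
noncomputable def rho2 (τ : Matrix (Fin 2) (Fin 2) ℝ) : ℝ :=
  if h : τ.IsHermitian then |h.eigenvalues 0| + |h.eigenvalues 1| else 0

/-- `H⁽²⁾(τ) = 2|τ₂|`, twice the largest absolute eigenvalue. -/
noncomputable def H2 (τ : Matrix (Fin 2) (Fin 2) ℝ) : ℝ :=
  if h : τ.IsHermitian then 2 * max |h.eigenvalues 0| |h.eigenvalues 1| else 0

/-- the quasiconvexified integrand `h_λ` for `n = 2`. -/
noncomputable def hlam (lam : ℝ) (τ : Matrix (Fin 2) (Fin 2) ℝ) : ℝ :=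
  if Real.sqrt lam ≤ rho2 τ then (frob τ) ^ 2 / Real.sqrt lam + Real.sqrt lam
  else 2 * (rho2 τ - |τ.det| / Real.sqrt lam)

open MeasureTheory

/-- The unit square `Q ⊂ ℝ²`. -/
def unitSquare : Set (Fin 2 → ℝ) := Set.univ.pi fun _ => Set.Icc (0 : ℝ) 1

/-!
In an eigenbasis `|u|² = a² + b²`, `ρ⁽²⁾(u) = |a| + |b|` and `|det u| = |a||b|`. Where
`ρ⁽²⁾(u) ≥ √λ`, `h_λ(u)` contains `|u|²/√λ` as a summand; elsewhere
`√λ · (h_λ(u) - |u|²/√λ) = ρ⁽²⁾(u) (2√λ - ρ⁽²⁾(u)) ≥ 0`. So `C = 1` works pointwise.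
-/

theorem Matrix.IsHermitian.trace_mul_self {𝕜 n : Type*} [RCLike 𝕜] [Fintype n] [DecidableEq n]
    {A : Matrix n n 𝕜} (hA : A.IsHermitian) :
    (A * A).trace = ∑ i, (hA.eigenvalues i : 𝕜) ^ 2 := by
  have hconj : A * A = Unitary.conjStarAlgAut 𝕜 _ hA.eigenvectorUnitary
      (Matrix.diagonal (RCLike.ofReal ∘ hA.eigenvalues) ^ 2) := by
    rw [map_pow, sq, ← hA.spectral_theorem]
  rw [hconj, Unitary.conjStarAlgAut_apply, Matrix.trace_mul_cycle, Unitary.coe_star_mul_self,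
    one_mul, Matrix.diagonal_pow, Matrix.trace_diagonal]
  rfl

theorem frob_sq_eq_sum_sq_eigenvalues {n : ℕ} {A : Matrix (Fin n) (Fin n) ℝ} (hA : A.IsHermitian) :
    frob A ^ 2 = ∑ i, hA.eigenvalues i ^ 2 := by
  have htrace := hA.trace_mul_self
  simp only [RCLike.ofReal_real_eq_id, id] at htrace
  rw [frob, Real.sq_sqrt (by positivity), ← htrace]
  simp only [Matrix.trace, Matrix.diag, Matrix.mul_apply, sq]
  refine Finset.sum_congr rfl fun i _ => Finset.sum_congr rfl fun j _ => ?_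
  rw [← star_trivial (A j i), hA.apply i j]

theorem rho2_eq_abs_add_abs {τ : Matrix (Fin 2) (Fin 2) ℝ} (hτ : τ.IsHermitian) :
    rho2 τ = |hτ.eigenvalues 0| + |hτ.eigenvalues 1| :=
  dif_pos hτ

theorem sq_add_sq_div_le {a b s : ℝ} (ha : 0 ≤ a) (hb : 0 ≤ b) (hs : a + b ≤ s) :
    (a ^ 2 + b ^ 2) / s ≤ 2 * (a + b - a * b / s) := by
  rcases (ha.trans (le_add_of_nonneg_right hb) |>.trans hs).eq_or_lt with rfl | hs₀
  · simp [add_nonneg ha hb]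
  · have hab : 2 * (a * b / s) * s = 2 * (a * b) := by field_simp
    rw [div_le_iff₀ hs₀, mul_sub, sub_mul, hab]
    nlinarith [mul_le_mul_of_nonneg_left hs (add_nonneg ha hb)]

theorem sq_frob_div_sqrt_le_hlam (lam : ℝ) {τ : Matrix (Fin 2) (Fin 2) ℝ} (hτ : τ.IsHermitian) :
    frob τ ^ 2 / Real.sqrt lam ≤ hlam lam τ := by
  rw [hlam]
  split_ifs with hρ
  · exact le_add_of_nonneg_right (Real.sqrt_nonneg lam)
  · rw [rho2_eq_abs_add_abs hτ] at hρ ⊢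
    rw [frob_sq_eq_sum_sq_eigenvalues hτ, hτ.det_eq_prod_eigenvalues, Fin.sum_univ_two,
      Fin.prod_univ_two, ← sq_abs (hτ.eigenvalues 0), ← sq_abs (hτ.eigenvalues 1)]
    simp only [RCLike.ofReal_real_eq_id, id, abs_mul]
    exact sq_add_sq_div_le (abs_nonneg _) (abs_nonneg _) (not_le.mp hρ).le

/-- there is a universal constant `C > 0` such that for all `λ ≥ 1` and all
measurable symmetric-matrix-valued fields `u` on the unit square,
`λ^{-1/2} ∫_Q |u|² dx ≤ C ∫_Q h_λ(u) dx`. -/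
theorem sq_int_le_hlam_int :
    ∃ C : ℝ, 0 < C ∧ ∀ lam : ℝ, 1 ≤ lam →
      ∀ u : (Fin 2 → ℝ) → Matrix (Fin 2) (Fin 2) ℝ,
        (∀ x, (u x).IsHermitian) → (∀ i j, Measurable fun x => u x i j) →
        ENNReal.ofReal (Real.sqrt lam)⁻¹ *
            ∫⁻ x in unitSquare, ENNReal.ofReal ((frob (u x)) ^ 2) ≤
          ENNReal.ofReal C * ∫⁻ x in unitSquare, ENNReal.ofReal (hlam lam (u x)) := by
  refine ⟨1, one_pos, fun lam _ u hu _ => ?_⟩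
  rw [ENNReal.ofReal_one, one_mul, ← lintegral_const_mul' _ _ ENNReal.ofReal_ne_top]
  refine lintegral_mono fun x => ?_
  rw [← ENNReal.ofReal_mul (inv_nonneg.mpr (Real.sqrt_nonneg lam)), inv_mul_eq_div]
  exact ENNReal.ofReal_le_ofReal (sq_frob_div_sqrt_le_hlam lam (hu x))
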